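/- arXiv:0804.0917 — 2 statements merged into one kernel-verified Lean document; each statement's English description precedes it below -/
import Mathlib

section
/- Composition–Diamond lemma for left ideals of a free algebra: Let S ⊆ k⟨X⟩ be a nonempty set of monic polynomials and < a left compatible well order on X*. Then the following are equivalent: (1) S is a Gröbner–Shirshov basis of the left ideal k⟨X⟩S; (2) for every nonzero f ∈ k⟨X⟩S, the leading word satisfies f̄ = a·s̄ for some a ∈ X* and s ∈ S; (2') every nonzero f ∈ k⟨X⟩S can be written f = Σᵢ αᵢaᵢsᵢ with αᵢ ∈ k nonzero, aᵢ ∈ X*, sᵢ ∈ S and a₁s̄₁ > a₂s̄₂ > … ; (3) the set Red(S) = {w ∈ X* : w ≠ a·s̄ for all a ∈ X*, s ∈ S} maps to a k-linear basis of the quotient left k⟨X⟩-module k⟨X⟩ / k⟨X⟩S. -/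
set_option linter.unusedSectionVars false
set_option maxHeartbeats 1000000


/-! Composition–Diamond lemma for left ideals of a free algebra. -/

open MonoidAlgebra

theorem IsWellOrder.trans {α : Type*} {r : α → α → Prop} (h : IsWellOrder α r) (a b c : α) :
    r a b → r b c → r a c := by
  haveI := h; exact IsTrans.trans a b c

/-- The free associative algebra `k⟨X⟩`, with `k`-basis the free monoid `X*`. -/
abbrev FreeAssocAlg (k X : Type*) [Field k] : Type _ := MonoidAlgebra k (FreeMonoid X)

variable {k X : Type*} [Field k]

/-- `w` is the leading word of `f` with respect to the order `lt` on `X*`: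
`w` lies in the support of `f` and every other word of the support is `lt`-smaller. -/
def LeadWord (lt : FreeMonoid X → FreeMonoid X → Prop) (f : FreeAssocAlg k X)
    (w : FreeMonoid X) : Prop :=
  f.coeff w ≠ 0 ∧ ∀ u : FreeMonoid X, f.coeff u ≠ 0 → u ≠ w → lt u w

/-- `f` is monic: the coefficient of its leading word is `1`. -/
def IsMonicPoly (lt : FreeMonoid X → FreeMonoid X → Prop) (f : FreeAssocAlg k X) : Prop :=
  ∃ w : FreeMonoid X, LeadWord lt f w ∧ f.coeff w = 1

/-- `h` is trivial modulo `(S, w)`: it can be written as `∑ αᵢ aᵢ sᵢ` with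
`sᵢ ∈ S`, `aᵢ ∈ X*` and `aᵢ·s̄ᵢ < w`. -/
def TrivialModLeft (lt : FreeMonoid X → FreeMonoid X → Prop) (S : Set (FreeAssocAlg k X))
    (h : FreeAssocAlg k X) (w : FreeMonoid X) : Prop :=
  ∃ (n : ℕ) (α : Fin n → k) (a : Fin n → FreeMonoid X) (s : Fin n → FreeAssocAlg k X)
    (ws : Fin n → FreeMonoid X),
      (∀ i, s i ∈ S) ∧ (∀ i, LeadWord lt (s i) (ws i)) ∧
      h = ∑ i, MonoidAlgebra.single (a i) (α i) * s i ∧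
      ∀ i, lt (a i * ws i) w

/-- `S` is a Gröbner–Shirshov basis of the left ideal `k⟨X⟩S`: every composition
`(f,g)_w = f − a·g` (where `w = f̄ = a·ḡ`) is trivial modulo `(S, w)`. -/
def IsGSBasisLeftIdeal (lt : FreeMonoid X → FreeMonoid X → Prop)
    (S : Set (FreeAssocAlg k X)) : Prop :=
  ∀ f ∈ S, ∀ g ∈ S, ∀ wf wg a : FreeMonoid X,
    LeadWord lt f wf → LeadWord lt g wg → wf = a * wg →
    TrivialModLeft lt S (f - MonoidAlgebra.single a (1 : k) * g) wf

section Basic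
variable (lt : FreeMonoid X → FreeMonoid X → Prop)

section Order
variable (hwo : IsWellOrder (FreeMonoid X) lt)
include hwo

theorem lt_asymm' {u v : FreeMonoid X} (h : lt u v) : ¬ lt v u :=
  hwo.wf.asymmetric u v h

theorem lt_ne {u v : FreeMonoid X} (h : lt u v) : u ≠ v := by
  rintro rfl; exact hwo.wf.asymmetric u u h h

theorem exists_max_list : ∀ (l : List (FreeMonoid X)), l ≠ [] →
    ∃ w ∈ l, ∀ u ∈ l, u = w ∨ lt u w := by
  intro l
  induction l with
  | nil => simp
  | cons a t ih =>
    intro _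
    rcases eq_or_ne t [] with rfl | ht
    · exact ⟨a, by simp, by simp⟩
    · obtain ⟨w, hwmem, hwmax⟩ := ih ht
      rcases (haveI := hwo; trichotomous_of lt a w) with h | h | h
      · refine ⟨w, by simp [hwmem], fun u hu => ?_⟩
        rcases List.mem_cons.1 hu with rfl | hu
        · exact Or.inr h
        · exact hwmax u hu
      · refine ⟨w, by simp [hwmem], fun u hu => ?_⟩
        rcases List.mem_cons.1 hu with rfl | hu
        · exact Or.inl h
        · exact hwmax u hu
      · refine ⟨a, by simp, fun u hu => ?_⟩
        rcases List.mem_cons.1 hu with rfl | hu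
        · exact Or.inl rfl
        · rcases hwmax u hu with rfl | hu'
          · exact Or.inr h
          · exact Or.inr (hwo.trans _ _ _ hu' h)

theorem exists_leadWord {f : FreeAssocAlg k X} (hf : f ≠ 0) :
    ∃ w, LeadWord lt f w := by
  have hs : f.coeff.support.toList ≠ [] := by
    simp [Finset.toList_eq_nil, Finsupp.support_eq_empty, hf]
  obtain ⟨w, hwmem, hwmax⟩ := exists_max_list lt hwo _ hs
  rw [Finset.mem_toList, Finsupp.mem_support_iff] at hwmem
  refine ⟨w, hwmem, fun u hu hne => ?_⟩
  have : u ∈ f.coeff.support.toList := by rw [Finset.mem_toList, Finsupp.mem_support_iff]; exact hu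
  rcases hwmax u this with rfl | h
  · exact absurd rfl hne
  · exact h

theorem leadWord_unique {f : FreeAssocAlg k X} {w w' : FreeMonoid X}
    (h : LeadWord lt f w) (h' : LeadWord lt f w') : w = w' := by
  by_contra hne
  exact lt_asymm' lt hwo (h.2 w' h'.1 (Ne.symm hne)) (h'.2 w h.1 hne)

theorem monic_coeff {f : FreeAssocAlg k X} {w : FreeMonoid X}
    (hm : IsMonicPoly lt f) (h : LeadWord lt f w) : f.coeff w = 1 := by
  obtain ⟨w', hw', h1⟩ := hm
  rwa [leadWord_unique lt hwo h hw']

end Order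

/-- Coefficient of `single a c * s` at `a * u`. -/
theorem single_mul_coeff (a : FreeMonoid X) (c : k) (s : FreeAssocAlg k X) (u : FreeMonoid X) :
    (MonoidAlgebra.single a c * s).coeff (a * u) = c * s.coeff u := by
  apply MonoidAlgebra.single_mul_apply_aux
  intro b _
  constructor
  · exact fun h => mul_left_cancel h
  · rintro rfl; rfl

/-- Support of `single a c * s` consists of words `a * u` with `u` in support of `s`. -/
theorem single_mul_support {a : FreeMonoid X} {c : k} {s : FreeAssocAlg k X} {v : FreeMonoid X}
    (h : (MonoidAlgebra.single a c * s).coeff v ≠ 0) : ∃ u, v = a * u ∧ s.coeff u ≠ 0 := by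
  classical
  have hv : v ∈ (MonoidAlgebra.single a c * s).coeff.support := Finsupp.mem_support_iff.2 h
  have := MonoidAlgebra.support_coeff_mul_subset (MonoidAlgebra.single a c) s hv
  rw [Finset.mem_mul] at this
  obtain ⟨x, hx, y, hy, rfl⟩ := this
  have hx' : x = a := by
    have := Finsupp.support_single_subset hx
    simpa using this
  subst hx'
  exact ⟨y, rfl, Finsupp.mem_support_iff.1 hy⟩

end Basic

/-! ### Representations as lists of entries `(α, a, s, ws)` -/

section Rep

open Classical in
/-- Entry: coefficient, left word, polynomial of `S`, its leading word. -/
abbrev RepEnt (k X : Type*) [Field k] : Type _ :=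
  k × FreeMonoid X × FreeAssocAlg k X × FreeMonoid X

variable {k X : Type*} [Field k]

def entLead (p : RepEnt k X) : FreeMonoid X := p.2.1 * p.2.2.2

noncomputable def entPoly (p : RepEnt k X) : FreeAssocAlg k X :=
  MonoidAlgebra.single p.2.1 p.1 * p.2.2.1

noncomputable def repSum (L : List (RepEnt k X)) : FreeAssocAlg k X := (L.map entPoly).sum

def IsRep (lt : FreeMonoid X → FreeMonoid X → Prop) (S : Set (FreeAssocAlg k X))
    (L : List (RepEnt k X)) : Prop :=
  ∀ p ∈ L, p.1 ≠ 0 ∧ p.2.2.1 ∈ S ∧ LeadWord lt p.2.2.1 p.2.2.2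

def Bound (lt : FreeMonoid X → FreeMonoid X → Prop) (L : List (RepEnt k X))
    (w : FreeMonoid X) : Prop :=
  ∀ p ∈ L, entLead p = w ∨ lt (entLead p) w

@[simp] theorem repSum_nil : repSum ([] : List (RepEnt k X)) = 0 := rfl

@[simp] theorem repSum_cons (p : RepEnt k X) (L : List (RepEnt k X)) :
    repSum (p :: L) = entPoly p + repSum L := by simp [repSum]

theorem repSum_append (L₁ L₂ : List (RepEnt k X)) :
    repSum (L₁ ++ L₂) = repSum L₁ + repSum L₂ := by simp [repSum]

theorem repSum_perm {L₁ L₂ : List (RepEnt k X)} (h : L₁.Perm L₂) : repSum L₁ = repSum L₂ :=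
  (h.map entPoly).sum_eq

theorem repSum_apply_ne_zero {L : List (RepEnt k X)} {u : FreeMonoid X}
    (h : (repSum L).coeff u ≠ 0) : ∃ p ∈ L, (entPoly p).coeff u ≠ 0 := by
  induction L with
  | nil => simp at h
  | cons p L ih =>
    rw [repSum_cons, MonoidAlgebra.coeff_add, Finsupp.add_apply] at h
    by_cases hp : (entPoly p).coeff u = 0
    · rw [hp, zero_add] at h
      obtain ⟨q, hq, hq'⟩ := ih h
      exact ⟨q, List.mem_cons_of_mem _ hq, hq'⟩
    · exact ⟨p, List.mem_cons_self, hp⟩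

section WithOrder
variable (lt : FreeMonoid X → FreeMonoid X → Prop)
  (hwo : IsWellOrder (FreeMonoid X) lt)
  (hleft : ∀ u v w : FreeMonoid X, lt u v → lt (w * u) (w * v))
include hwo hleft

/-- helper transitivity for `≤` defined from `lt`. -/
theorem wle_trans {u v w : FreeMonoid X} (h1 : u = v ∨ lt u v) (h2 : v = w ∨ lt v w) :
    u = w ∨ lt u w := by
  rcases h1 with rfl | h1
  · exact h2
  · rcases h2 with rfl | h2
    · exact Or.inr h1
    · exact Or.inr (hwo.trans _ _ _ h1 h2)

theorem entPoly_apply_bound {p : RepEnt k X} (hl : LeadWord lt p.2.2.1 p.2.2.2)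
    {u : FreeMonoid X} (h : (entPoly p).coeff u ≠ 0) : u = entLead p ∨ lt u (entLead p) := by
  obtain ⟨v, rfl, hv⟩ := single_mul_support h
  by_cases hne : v = p.2.2.2
  · subst hne; exact Or.inl rfl
  · exact Or.inr (hleft _ _ _ (hl.2 v hv hne))

theorem entPoly_lead_coeff {p : RepEnt k X} (hl : LeadWord lt p.2.2.1 p.2.2.2)
    (hm : IsMonicPoly lt p.2.2.1) : (entPoly p).coeff (entLead p) = p.1 := by
  rw [entPoly, entLead, single_mul_coeff, monic_coeff lt hwo hm hl, mul_one]

theorem entPoly_apply_eq_zero_of_lt {p : RepEnt k X} (hl : LeadWord lt p.2.2.1 p.2.2.2)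
    {u : FreeMonoid X} (h : lt (entLead p) u) : (entPoly p).coeff u = 0 := by
  by_contra h0
  rcases entPoly_apply_bound lt hwo hleft hl h0 with rfl | h'
  · exact hwo.wf.asymmetric _ _ h h
  · exact hwo.wf.asymmetric _ _ h h'

end WithOrder

end Rep

section Count
open scoped Classical

variable {k X : Type*} [Field k]

noncomputable def cntW (w : FreeMonoid X) (L : List (RepEnt k X)) : ℕ :=
  L.countP (fun p => decide (entLead p = w))

theorem cntW_perm {w : FreeMonoid X} {L₁ L₂ : List (RepEnt k X)} (h : L₁.Perm L₂) :
    cntW w L₁ = cntW w L₂ := h.countP_eq _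

theorem cntW_cons (w : FreeMonoid X) (p : RepEnt k X) (L : List (RepEnt k X)) :
    cntW w (p :: L) = cntW w L + if entLead p = w then 1 else 0 := by
  simp [cntW, List.countP_cons]

theorem cntW_append (w : FreeMonoid X) (L₁ L₂ : List (RepEnt k X)) :
    cntW w (L₁ ++ L₂) = cntW w L₁ + cntW w L₂ := by
  simp [cntW, List.countP_append]

theorem cntW_eq_zero {w : FreeMonoid X} {L : List (RepEnt k X)} (h : cntW w L = 0) :
    ∀ p ∈ L, entLead p ≠ w := by
  intro p hp
  have := List.countP_eq_zero.1 h p hp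
  simpa using this

theorem cntW_eq_zero_of {w : FreeMonoid X} {L : List (RepEnt k X)}
    (h : ∀ p ∈ L, entLead p ≠ w) : cntW w L = 0 := by
  apply List.countP_eq_zero.2
  intro p hp
  simpa using h p hp

theorem exists_extract {w : FreeMonoid X} {L : List (RepEnt k X)} (h : 0 < cntW w L) :
    ∃ p L', L.Perm (p :: L') ∧ entLead p = w ∧ cntW w L' = cntW w L - 1 := by
  induction L with
  | nil => simp [cntW] at h
  | cons a t ih =>
    by_cases ha : entLead a = w
    · exact ⟨a, t, List.Perm.refl _, ha, by simp [cntW_cons, ha]⟩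
    · rw [cntW_cons, if_neg ha, add_zero] at h
      obtain ⟨p, L', hperm, hp, hc⟩ := ih h
      refine ⟨p, a :: L', ?_, hp, ?_⟩
      · exact (hperm.cons a).trans (List.Perm.swap _ _ _)
      · rw [cntW_cons, if_neg ha, add_zero, hc, cntW_cons, if_neg ha, add_zero]

end Count

section KeyLemma

variable {k X : Type*} [Field k]
variable (lt : FreeMonoid X → FreeMonoid X → Prop)
  (hwo : IsWellOrder (FreeMonoid X) lt)
  (hleft : ∀ u v w : FreeMonoid X, lt u v → lt (w * u) (w * v))
  (S : Set (FreeAssocAlg k X))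
  (hmonic : ∀ s ∈ S, IsMonicPoly lt s)
include hwo hleft hmonic

theorem repSum_coeff_zero {L : List (RepEnt k X)} {w : FreeMonoid X}
    (hrep : IsRep lt S L) (h : ∀ p ∈ L, lt (entLead p) w) : (repSum L).coeff w = 0 := by
  induction L with
  | nil => simp
  | cons p t ih =>
    rw [repSum_cons, MonoidAlgebra.coeff_add, Finsupp.add_apply,
      entPoly_apply_eq_zero_of_lt lt hwo hleft (hrep p (List.mem_cons_self)).2.2
        (h p (List.mem_cons_self)),
      zero_add]
    exact ih (fun q hq => hrep q (List.mem_cons_of_mem _ hq))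
      (fun q hq => h q (List.mem_cons_of_mem _ hq))

theorem rep_lead {L : List (RepEnt k X)} {w : FreeMonoid X}
    (hrep : IsRep lt S L) (hbd : Bound lt L w) (hcnt : cntW w L = 1) :
    LeadWord lt (repSum L) w := by
  obtain ⟨p, L', hperm, hp, hc⟩ := exists_extract (w := w) (L := L) (by omega)
  rw [hcnt] at hc
  have hrep' : IsRep lt S (p :: L') := fun q hq => hrep q (hperm.symm.subset hq)
  have hbd' : Bound lt (p :: L') w := fun q hq => hbd q (hperm.symm.subset hq)
  rw [repSum_perm hperm, repSum_cons]
  constructor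
  · rw [MonoidAlgebra.coeff_add, Finsupp.add_apply]
    have h1 : (entPoly p).coeff w = p.1 := by
      rw [← hp]
      exact entPoly_lead_coeff lt hwo hleft
        (hrep' p (List.mem_cons_self)).2.2
        (hmonic _ (hrep' p (List.mem_cons_self)).2.1)
    have h2 : (repSum L').coeff w = 0 := by
      apply repSum_coeff_zero lt hwo hleft S hmonic
        (fun q hq => hrep' q (List.mem_cons_of_mem _ hq))
      intro q hq
      rcases hbd' q (List.mem_cons_of_mem _ hq) with h | h
      · exact absurd h (cntW_eq_zero hc q hq)
      · exact h
    rw [h1, h2, add_zero]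
    exact (hrep' p (List.mem_cons_self)).1
  · intro u hu hne
    obtain ⟨q, hq, hq'⟩ := repSum_apply_ne_zero (by rwa [← repSum_cons] at hu)
    have h1 := entPoly_apply_bound lt hwo hleft (hrep' q hq).2.2 hq'
    have h2 := hbd' q hq
    rcases wle_trans lt hwo hleft h1 h2 with rfl | h
    · exact absurd rfl hne
    · exact h

end KeyLemma

section Prefix
variable {X : Type*}

theorem freeMonoid_prefix {a b c d : FreeMonoid X} (h : a * b = c * d)
    (hl : (FreeMonoid.toList c).length ≤ (FreeMonoid.toList a).length) :
    ∃ e, a = c * e ∧ d = e * b := by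
  have h' : FreeMonoid.toList a ++ FreeMonoid.toList b
      = FreeMonoid.toList c ++ FreeMonoid.toList d := by
    rw [← FreeMonoid.toList_mul, ← FreeMonoid.toList_mul, h]
  have hpa : FreeMonoid.toList a <+: FreeMonoid.toList a ++ FreeMonoid.toList b :=
    List.prefix_append _ _
  have hpc : FreeMonoid.toList c <+: FreeMonoid.toList a ++ FreeMonoid.toList b := by
    rw [h']; exact List.prefix_append _ _
  obtain ⟨e', he'⟩ := List.prefix_of_prefix_length_le hpc hpa hl
  refine ⟨FreeMonoid.ofList e', ?_, ?_⟩
  · apply FreeMonoid.toList.injective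
    rw [FreeMonoid.toList_mul, FreeMonoid.toList_ofList, he']
  · apply FreeMonoid.toList.injective
    rw [FreeMonoid.toList_mul, FreeMonoid.toList_ofList]
    have : (FreeMonoid.toList c ++ e') ++ FreeMonoid.toList b
        = FreeMonoid.toList c ++ FreeMonoid.toList d := by rw [he', h']
    rw [List.append_assoc] at this
    exact (List.append_cancel_left this).symm

end Prefix

section Filter
open scoped Classical
variable {k X : Type*} [Field k]

theorem repSum_filter (L : List (RepEnt k X)) :
    repSum (L.filter (fun e => decide (e.1 ≠ 0))) = repSum L := by
  induction L with
  | nil => rfl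
  | cons p t ih =>
    by_cases hp : p.1 ≠ 0
    · rw [List.filter_cons_of_pos (by simpa using hp), repSum_cons, repSum_cons, ih]
    · push_neg at hp
      rw [List.filter_cons_of_neg (by simpa using hp), repSum_cons, ih]
      have : entPoly p = 0 := by
        rw [entPoly, hp]
        simp
      rw [this, zero_add]

theorem repSum_ofFn {n : ℕ} (g : Fin n → RepEnt k X) :
    repSum (List.ofFn g) = ∑ i, entPoly (g i) := by
  rw [repSum, List.map_ofFn, List.sum_ofFn]
  rfl

end Filter

section Rewrite
open scoped Classical

variable {k X : Type*} [Field k]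
variable (lt : FreeMonoid X → FreeMonoid X → Prop)
  (hwo : IsWellOrder (FreeMonoid X) lt)
  (hleft : ∀ u v w : FreeMonoid X, lt u v → lt (w * u) (w * v))
  (S : Set (FreeAssocAlg k X))
  (hmonic : ∀ s ∈ S, IsMonicPoly lt s)
include hwo hleft hmonic

theorem rewrite_step (hGS : IsGSBasisLeftIdeal lt S) {w : FreeMonoid X}
    {p q : RepEnt k X} {R : List (RepEnt k X)}
    (hrep : IsRep lt S (p :: q :: R)) (hbd : Bound lt (p :: q :: R) w)
    (hp : entLead p = w) (hq : entLead q = w)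
    (hlen : (FreeMonoid.toList q.2.1).length ≤ (FreeMonoid.toList p.2.1).length) :
    ∃ L', IsRep lt S L' ∧ Bound lt L' w ∧ repSum L' = repSum (p :: q :: R) ∧
      cntW w L' ≤ cntW w R + 1 := by
  obtain ⟨αp, ap, sp, wsp⟩ := p
  obtain ⟨αq, aq, sq, wsq⟩ := q
  have hpmem := hrep _ (List.mem_cons_self)
  have hqmem := hrep _ (List.mem_cons_of_mem _ (List.mem_cons_self))
  obtain ⟨hαp, hspS, hlp⟩ := hpmem
  obtain ⟨hαq, hsqS, hlq⟩ := hqmem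
  simp only at hαp hspS hlp hαq hsqS hlq
  -- extract the prefix
  have heq : ap * wsp = aq * wsq := by
    have : entLead (αp, ap, sp, wsp) = entLead (αq, aq, sq, wsq) := by rw [hp, hq]
    simpa [entLead] using this
  obtain ⟨b, hab, hws⟩ := freeMonoid_prefix heq hlen
  -- composition
  obtain ⟨n, α', a', s', ws', hs'S, hls', hdecomp, hlt'⟩ :=
    hGS sq hsqS sp hspS wsq wsp b hlq hlp hws
  set hcomp : FreeAssocAlg k X := sq - MonoidAlgebra.single b (1 : k) * sp with hhc
  -- the new list
  set hlist : List (RepEnt k X) :=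
    (List.ofFn fun i => ((αq * α' i, aq * a' i, s' i, ws' i) : RepEnt k X)).filter
      (fun e => decide (e.1 ≠ 0)) with hhlist
  set headPart : List (RepEnt k X) :=
    if αp + αq = 0 then [] else [(αp + αq, ap, sp, wsp)] with hhead
  refine ⟨headPart ++ hlist ++ R, ?_, ?_, ?_, ?_⟩
  · -- IsRep
    intro e he
    rcases List.mem_append.1 he with he | heR
    · rcases List.mem_append.1 he with heH | heL
      · rw [hhead] at heH
        split_ifs at heH with h0
        · simp at heH
        · rw [List.mem_singleton] at heH
          subst heH
          exact ⟨h0, hspS, hlp⟩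
      · rw [hhlist, List.mem_filter] at heL
        obtain ⟨heL, hne⟩ := heL
        obtain ⟨i, hi⟩ := List.mem_ofFn.1 heL
        subst hi
        refine ⟨by simpa using hne, hs'S i, hls' i⟩
    · exact hrep e (List.mem_cons_of_mem _ (List.mem_cons_of_mem _ heR))
  · -- Bound
    intro e he
    rcases List.mem_append.1 he with he | heR
    · rcases List.mem_append.1 he with heH | heL
      · rw [hhead] at heH
        split_ifs at heH with h0
        · simp at heH
        · rw [List.mem_singleton] at heH
          subst heH
          left
          rw [← hp]; rfl
      · rw [hhlist, List.mem_filter] at heL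
        obtain ⟨heL, _⟩ := heL
        obtain ⟨i, hi⟩ := List.mem_ofFn.1 heL
        subst hi
        right
        have : entLead ((αq * α' i, aq * a' i, s' i, ws' i) : RepEnt k X)
            = aq * (a' i * ws' i) := by
          simp [entLead, mul_assoc]
        rw [this, ← hq]
        have : entLead ((αq, aq, sq, wsq) : RepEnt k X) = aq * wsq := rfl
        rw [this]
        exact hleft _ _ _ (hlt' i)
    · exact hbd e (List.mem_cons_of_mem _ (List.mem_cons_of_mem _ heR))
  · -- sums agree
    have e1 : MonoidAlgebra.single aq αq * (MonoidAlgebra.single b (1 : k) * sp)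
        = MonoidAlgebra.single ap αq * sp := by
      rw [← mul_assoc, MonoidAlgebra.single_mul_single, mul_one, ← hab]
    have e2 : repSum hlist = MonoidAlgebra.single aq αq * hcomp := by
      rw [hhlist, repSum_filter, repSum_ofFn, hdecomp, Finset.mul_sum]
      congr 1
      funext i
      rw [entPoly, ← mul_assoc, MonoidAlgebra.single_mul_single]
    have e3 : repSum headPart = MonoidAlgebra.single ap (αp + αq) * sp := by
      rw [hhead]
      split_ifs with h0
      · rw [h0]; simp
      · rw [repSum_cons, repSum_nil, add_zero]; rfl
    rw [repSum_append, repSum_append, e2, e3, repSum_cons, repSum_cons]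
    have e4 : entPoly ((αp, ap, sp, wsp) : RepEnt k X) = MonoidAlgebra.single ap αp * sp := rfl
    have e5 : entPoly ((αq, aq, sq, wsq) : RepEnt k X) = MonoidAlgebra.single aq αq * sq := rfl
    rw [e4, e5, hhc, mul_sub, e1, MonoidAlgebra.single_add, add_mul]
    abel
  · -- count decreased
    rw [cntW_append, cntW_append]
    have c1 : cntW w headPart ≤ 1 := by
      rw [hhead]
      split_ifs
      · simp [cntW]
      · simp [cntW, List.countP_cons]
        split_ifs <;> simp
    have c2 : cntW w hlist = 0 := by
      apply cntW_eq_zero_of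
      intro e he
      rw [hhlist, List.mem_filter] at he
      obtain ⟨heL, _⟩ := he
      obtain ⟨i, hi⟩ := List.mem_ofFn.1 heL
      subst hi
      have hlt : lt (entLead ((αq * α' i, aq * a' i, s' i, ws' i) : RepEnt k X)) w := by
        have : entLead ((αq * α' i, aq * a' i, s' i, ws' i) : RepEnt k X)
            = aq * (a' i * ws' i) := by simp [entLead, mul_assoc]
        rw [this, ← hq]
        exact hleft _ _ _ (hlt' i)
      exact lt_ne lt hwo hlt
    omega

end Rewrite

section FinsetList
variable {α M : Type*} [AddCommMonoid M]
theorem list_sum_toList (s : Finset α) (f : α → M) : (s.toList.map f).sum = ∑ x ∈ s, f x := by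
  rw [Finset.sum]
  conv_rhs => rw [← Multiset.coe_toList s.val]
  rw [Multiset.map_coe, Multiset.sum_coe]
  rfl
end FinsetList

section Key

variable {k X : Type*} [Field k]
variable (lt : FreeMonoid X → FreeMonoid X → Prop)
  (hwo : IsWellOrder (FreeMonoid X) lt)
  (hleft : ∀ u v w : FreeMonoid X, lt u v → lt (w * u) (w * v))
  (S : Set (FreeAssocAlg k X))
  (hmonic : ∀ s ∈ S, IsMonicPoly lt s)
include hwo hleft hmonic

theorem key_lemma (hGS : IsGSBasisLeftIdeal lt S) (w : FreeMonoid X) :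
    ∀ m (L : List (RepEnt k X)), IsRep lt S L → Bound lt L w → cntW w L ≤ m →
      repSum L ≠ 0 →
      ∃ (a ws wf : FreeMonoid X) (s : FreeAssocAlg k X),
        s ∈ S ∧ LeadWord lt s ws ∧ LeadWord lt (repSum L) wf ∧ wf = a * ws := by
  induction w using (hwo.wf).induction with
  | _ w ihw =>
  intro m
  induction m with
  | zero =>
    intro L hrep hbd hcnt hne
    have h0 : ∀ p ∈ L, lt (entLead p) w := by
      intro p hp
      exact (hbd p hp).resolve_left (cntW_eq_zero (Nat.le_zero.1 hcnt) p hp)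
    have hLne : L ≠ [] := by rintro rfl; exact hne rfl
    obtain ⟨w', hw'mem, hw'max⟩ := exists_max_list lt hwo (L.map entLead) (by simpa using hLne)
    obtain ⟨p0, hp0, rfl⟩ := List.mem_map.1 hw'mem
    have hbd' : Bound lt L (entLead p0) := fun p hp =>
      hw'max (entLead p) (List.mem_map_of_mem hp)
    exact ihw (entLead p0) (h0 p0 hp0) (cntW (entLead p0) L) L hrep hbd' le_rfl hne
  | succ m ihm =>
    intro L hrep hbd hcnt hne
    by_cases hc : cntW w L ≤ m
    · exact ihm L hrep hbd hc hne
    · have hceq : cntW w L = m + 1 := le_antisymm hcnt (by omega)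
      rcases Nat.lt_or_ge (cntW w L) 2 with h2 | h2
      · -- count = 1 : base case
        have h1 : cntW w L = 1 := by omega
        obtain ⟨p, L', hperm, hp, _⟩ := exists_extract (w := w) (L := L) (by omega)
        refine ⟨p.2.1, p.2.2.2, w, p.2.2.1,
          (hrep p (hperm.symm.subset (List.mem_cons_self))).2.1,
          (hrep p (hperm.symm.subset (List.mem_cons_self))).2.2,
          rep_lead lt hwo hleft S hmonic hrep hbd h1, hp.symm⟩
      · -- count ≥ 2 : rewrite step
        obtain ⟨p, L1, hperm1, hp, hc1⟩ := exists_extract (w := w) (L := L) (by omega)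
        obtain ⟨q, R, hperm2, hq, hc2⟩ := exists_extract (w := w) (L := L1) (by omega)
        have hperm : L.Perm (p :: q :: R) := hperm1.trans (hperm2.cons p)
        have hrep2 : IsRep lt S (p :: q :: R) := fun e he => hrep e (hperm.symm.subset he)
        have hbd2 : Bound lt (p :: q :: R) w := fun e he => hbd e (hperm.symm.subset he)
        have hcntR : cntW w R = m - 1 := by omega
        have step : ∃ L', IsRep lt S L' ∧ Bound lt L' w ∧ repSum L' = repSum (p :: q :: R) ∧
            cntW w L' ≤ cntW w R + 1 := by
          rcases le_total (FreeMonoid.toList q.2.1).length (FreeMonoid.toList p.2.1).length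
            with hlen | hlen
          · exact rewrite_step lt hwo hleft S hmonic hGS hrep2 hbd2 hp hq hlen
          · have hswap : (p :: q :: R).Perm (q :: p :: R) := List.Perm.swap _ _ _
            obtain ⟨L', h1', h2', h3', h4'⟩ := rewrite_step lt hwo hleft S hmonic hGS
              (fun e he => hrep2 e (hswap.symm.subset he))
              (fun e he => hbd2 e (hswap.symm.subset he)) hq hp hlen
            exact ⟨L', h1', h2', h3'.trans (repSum_perm hswap.symm), h4'⟩
        obtain ⟨L', hrep', hbd', hsum', hcnt'⟩ := step
        have hsumL : repSum L' = repSum L := hsum'.trans (repSum_perm hperm.symm)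
        have hres := ihm L' hrep' hbd' (by omega) (by rwa [hsumL])
        rwa [hsumL] at hres

end Key

section SpanRep

variable {k X : Type*} [Field k]
variable (lt : FreeMonoid X → FreeMonoid X → Prop)
  (S : Set (FreeAssocAlg k X))
  (hmonic : ∀ s ∈ S, IsMonicPoly lt s)
include hmonic

theorem span_to_rep {f : FreeAssocAlg k X}
    (hf : f ∈ Submodule.span (FreeAssocAlg k X) S) :
    ∃ L : List (RepEnt k X), IsRep lt S L ∧ repSum L = f := by
  classical
  obtain ⟨n, c, g, hsum⟩ := Submodule.mem_span_set'.1 hf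
  choose gws hgws using fun i => hmonic (g i).1 (g i).2
  let Li : Fin n → List (RepEnt k X) := fun i =>
    (c i).coeff.support.toList.map fun u => (((c i).coeff u, u, (g i).1, gws i) : RepEnt k X)
  refine ⟨(List.ofFn Li).flatten, ?_, ?_⟩
  · intro p hp
    rw [List.mem_flatten] at hp
    obtain ⟨l, hl, hpl⟩ := hp
    obtain ⟨i, hi⟩ := List.mem_ofFn.1 hl
    subst hi
    obtain ⟨u, hu, rfl⟩ := List.mem_map.1 hpl
    rw [Finset.mem_toList, Finsupp.mem_support_iff] at hu
    exact ⟨hu, (g i).2, (hgws i).1⟩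
  · rw [repSum, List.map_flatten, List.sum_flatten, List.map_map, List.map_ofFn,
      List.sum_ofFn]
    rw [← hsum]
    apply Finset.sum_congr rfl
    intro i _
    have : ((List.sum ∘ List.map entPoly) ∘ Li) i
        = ∑ u ∈ (c i).coeff.support, MonoidAlgebra.single u ((c i).coeff u) * (g i).1 := by
      show ((Li i).map entPoly).sum = _
      show ((((c i).coeff.support.toList).map
        (fun u => (((c i).coeff u, u, (g i).1, gws i) : RepEnt k X))).map entPoly).sum = _
      rw [List.map_map, list_sum_toList]
      exact Finset.sum_congr rfl (fun u _ => rfl)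
    rw [this, ← Finset.sum_mul]
    rw [smul_eq_mul]
    congr 1
    conv_rhs => rw [← MonoidAlgebra.sum_coeff_single (c i)]
    rfl

end SpanRep

section Main

variable {k X : Type*} [Field k]
variable (lt : FreeMonoid X → FreeMonoid X → Prop)
  (hwo : IsWellOrder (FreeMonoid X) lt)
  (hleft : ∀ u v w : FreeMonoid X, lt u v → lt (w * u) (w * v))
  (S : Set (FreeAssocAlg k X))
  (hmonic : ∀ s ∈ S, IsMonicPoly lt s)

/-- Condition (2). -/
def Cond2 : Prop :=
  ∀ f ∈ Submodule.span (FreeAssocAlg k X) S, f ≠ 0 →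
    ∃ (a ws wf : FreeMonoid X) (s : FreeAssocAlg k X),
      s ∈ S ∧ LeadWord lt s ws ∧ LeadWord lt f wf ∧ wf = a * ws

include hwo hleft hmonic

theorem one_implies_two (hGS : IsGSBasisLeftIdeal lt S) : Cond2 lt S := by
  intro f hf hne
  obtain ⟨L, hrep, hsum⟩ := span_to_rep lt S hmonic hf
  have hLne : L ≠ [] := by rintro rfl; exact hne (hsum.symm.trans rfl)
  obtain ⟨w0, hw0mem, hw0max⟩ := exists_max_list lt hwo (L.map entLead) (by simpa using hLne)
  have hbd : Bound lt L w0 := fun p hp => hw0max (entLead p) (List.mem_map_of_mem hp)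
  have := key_lemma lt hwo hleft S hmonic hGS w0 (cntW w0 L) L hrep hbd le_rfl
    (by rwa [hsum])
  rwa [hsum] at this

theorem decomp (H2 : Cond2 lt S) :
    ∀ w (f : FreeAssocAlg k X), f ∈ Submodule.span (FreeAssocAlg k X) S → f ≠ 0 →
      LeadWord lt f w →
      ∃ L : List (RepEnt k X), IsRep lt S L ∧ repSum L = f ∧ L ≠ [] ∧ Bound lt L w ∧
        List.Pairwise (fun p q : RepEnt k X => lt (entLead q) (entLead p)) L := by
  intro w
  induction w using (hwo.wf).induction with
  | _ w ih =>
  intro f hf hne hlf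
  obtain ⟨a, ws, wf', s, hsS, hlws, hlf', heq⟩ := H2 f hf hne
  have hwf' : wf' = w := leadWord_unique lt hwo hlf' hlf
  rw [hwf'] at hlf' heq
  set c := f.coeff w with hc
  have hcne : c ≠ 0 := hlf.1
  set p0 : RepEnt k X := (c, a, s, ws) with hp0
  have hprod : entPoly p0 = MonoidAlgebra.single a c * s := rfl
  have hlead0 : entLead p0 = w := heq.symm
  set f' := f - entPoly p0 with hf'
  have hmem' : f' ∈ Submodule.span (FreeAssocAlg k X) S := by
    refine Submodule.sub_mem _ hf ?_
    have := Submodule.smul_mem (Submodule.span (FreeAssocAlg k X) S)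
      (MonoidAlgebra.single a c) (Submodule.subset_span hsS)
    rwa [smul_eq_mul] at this
  have hcoeff : f'.coeff w = 0 := by
    rw [hf', MonoidAlgebra.coeff_sub, Finsupp.sub_apply, hprod, heq, single_mul_coeff,
      monic_coeff lt hwo (hmonic s hsS) hlws, mul_one, ← heq, ← hc, sub_self]
  have hbound' : ∀ u, f'.coeff u ≠ 0 → lt u w := by
    intro u hu
    have hune : u ≠ w := by rintro rfl; exact hu hcoeff
    have : f.coeff u ≠ 0 ∨ (entPoly p0).coeff u ≠ 0 := by
      by_contra hcon
      push_neg at hcon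
      apply hu
      rw [hf', MonoidAlgebra.coeff_sub, Finsupp.sub_apply, hcon.1, hcon.2, sub_self]
    rcases this with h | h
    · exact hlf.2 u h hune
    · rcases entPoly_apply_bound lt hwo hleft hlws h with h' | h'
      · rw [hlead0] at h'; exact absurd h' hune
      · rwa [hlead0] at h'
  by_cases hf'0 : f' = 0
  · refine ⟨[p0], ?_, ?_, by simp, ?_, by simp⟩
    · intro q hq
      rw [List.mem_singleton] at hq
      subst hq
      exact ⟨hcne, hsS, hlws⟩
    · rw [repSum_cons, repSum_nil, add_zero]
      have := sub_eq_zero.1 hf'0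
      exact this.symm
    · intro q hq
      rw [List.mem_singleton] at hq
      subst hq
      exact Or.inl hlead0
  · obtain ⟨w', hlw'⟩ := exists_leadWord lt hwo hf'0
    have hw'lt : lt w' w := hbound' w' hlw'.1
    obtain ⟨L', hrep', hsum', _, hbd', hpw'⟩ := ih w' hw'lt f' hmem' hf'0 hlw'
    refine ⟨p0 :: L', ?_, ?_, by simp, ?_, ?_⟩
    · intro q hq
      rcases List.mem_cons.1 hq with rfl | hq
      · exact ⟨hcne, hsS, hlws⟩
      · exact hrep' q hq
    · rw [repSum_cons, hsum', hf']
      abel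
    · intro q hq
      rcases List.mem_cons.1 hq with rfl | hq
      · exact Or.inl hlead0
      · rcases hbd' q hq with h | h
        · exact Or.inr (h ▸ hw'lt)
        · exact Or.inr (hwo.trans _ _ _ h hw'lt)
    · rw [List.pairwise_cons]
      refine ⟨?_, hpw'⟩
      intro q hq
      rw [hlead0]
      rcases hbd' q hq with h | h
      · exact h ▸ hw'lt
      · exact hwo.trans _ _ _ h hw'lt

end Main

section FinConv
variable {k X : Type*} [Field k]

theorem repSum_eq_fin (L : List (RepEnt k X)) :
    repSum L = ∑ i : Fin L.length, entPoly (L.get i) := by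
  induction L with
  | nil => simp
  | cons p t ih =>
    rw [repSum_cons, ih]
    show _ = ∑ i : Fin (t.length + 1), entPoly ((p :: t).get i)
    rw [Fin.sum_univ_succ]
    rfl

end FinConv

section Main2

variable {k X : Type*} [Field k]
variable (lt : FreeMonoid X → FreeMonoid X → Prop)
  (hwo : IsWellOrder (FreeMonoid X) lt)
  (hleft : ∀ u v w : FreeMonoid X, lt u v → lt (w * u) (w * v))
  (S : Set (FreeAssocAlg k X))
  (hmonic : ∀ s ∈ S, IsMonicPoly lt s)

/-- Condition (2'). -/
def Cond2' : Prop :=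
  ∀ f ∈ Submodule.span (FreeAssocAlg k X) S, f ≠ 0 →
    ∃ (n : ℕ) (α : Fin n → k) (a : Fin n → FreeMonoid X)
      (s : Fin n → FreeAssocAlg k X) (ws : Fin n → FreeMonoid X),
        (∀ i, α i ≠ 0) ∧ (∀ i, s i ∈ S) ∧ (∀ i, LeadWord lt (s i) (ws i)) ∧
        f = ∑ i, MonoidAlgebra.single (a i) (α i) * s i ∧
        ∀ i j : Fin n, i < j → lt (a j * ws j) (a i * ws i)

include hwo hleft hmonic

theorem two_implies_two' (H2 : Cond2 lt S) : Cond2' lt S := by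
  intro f hf hne
  obtain ⟨w, hlw⟩ := exists_leadWord lt hwo hne
  obtain ⟨L, hrep, hsum, _, _, hpw⟩ := decomp lt hwo hleft S hmonic H2 w f hf hne hlw
  refine ⟨L.length, fun i => (L.get i).1, fun i => (L.get i).2.1,
    fun i => (L.get i).2.2.1, fun i => (L.get i).2.2.2, ?_, ?_, ?_, ?_, ?_⟩
  · exact fun i => (hrep _ (L.get_mem i)).1
  · exact fun i => (hrep _ (L.get_mem i)).2.1
  · exact fun i => (hrep _ (L.get_mem i)).2.2
  · rw [← hsum, repSum_eq_fin]
    rfl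
  · intro i j hij
    exact List.pairwise_iff_get.1 hpw i j hij

theorem two'_implies_two (H2' : Cond2' lt S) : Cond2 lt S := by
  intro f hf hne
  obtain ⟨n, α, a, s, ws, hα, hsS, hlws, hsum, hdec⟩ := H2' f hf hne
  have hn : 0 < n := by
    rcases Nat.eq_zero_or_pos n with rfl | h
    · exfalso; apply hne; rw [hsum]; simp
    · exact h
  set i0 : Fin n := ⟨0, hn⟩ with hi0
  set wf := a i0 * ws i0 with hwf
  set P : Fin n → RepEnt k X := fun i => (α i, a i, s i, ws i) with hP
  have hent : ∀ i, entPoly (P i) = MonoidAlgebra.single (a i) (α i) * s i := fun _ => rfl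
  have hlead : ∀ i, entLead (P i) = a i * ws i := fun _ => rfl
  have hle : ∀ i, i ≠ i0 → lt (a i * ws i) wf := by
    intro i hi
    have h0i : i0 < i := by
      rcases Fin.lt_or_lt_of_ne hi with h | h
      · exact absurd h (by simp [hi0, Fin.lt_def])
      · exact h
    exact hdec i0 i h0i
  have hcoeff : f.coeff wf = α i0 := by
    rw [hsum, MonoidAlgebra.coeff_sum, Finsupp.finset_sum_apply]
    rw [Finset.sum_eq_single i0]
    · rw [← hent, hwf, ← hlead, entPoly_lead_coeff lt hwo hleft (hlws i0) (hmonic _ (hsS i0))]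
    · intro i _ hi
      rw [← hent]
      exact entPoly_apply_eq_zero_of_lt lt hwo hleft (hlws i) (by rw [hlead]; exact hle i hi)
    · intro h
      exact absurd (Finset.mem_univ i0) h
  refine ⟨a i0, ws i0, wf, s i0, hsS i0, hlws i0, ⟨?_, ?_⟩, rfl⟩
  · rw [hcoeff]; exact hα i0
  · intro u hu hune
    rw [hsum, MonoidAlgebra.coeff_sum, Finsupp.finset_sum_apply] at hu
    obtain ⟨i, _, hi⟩ := Finset.exists_ne_zero_of_sum_ne_zero hu
    have h1 := entPoly_apply_bound lt hwo hleft (hlws i) (p := P i) hi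
    rw [hlead] at h1
    by_cases hii : i = i0
    · subst hii
      rcases h1 with h | h
      · exact absurd h hune
      · exact h
    · have h2 := hle i hii
      rcases h1 with rfl | h
      · exact h2
      · exact hwo.trans _ _ _ h h2

theorem two_implies_one (H2 : Cond2 lt S) : IsGSBasisLeftIdeal lt S := by
  intro f hfS g hgS wf wg a hlf hlg heq
  set h := f - MonoidAlgebra.single a (1 : k) * g with hh
  by_cases hh0 : h = 0
  · exact ⟨0, Fin.elim0, Fin.elim0, Fin.elim0, Fin.elim0,
      fun i => i.elim0, fun i => i.elim0, by rw [hh0]; simp, fun i => i.elim0⟩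
  · have hmem : h ∈ Submodule.span (FreeAssocAlg k X) S := by
      refine Submodule.sub_mem _ (Submodule.subset_span hfS) ?_
      have := Submodule.smul_mem (Submodule.span (FreeAssocAlg k X) S)
        (MonoidAlgebra.single a (1 : k)) (Submodule.subset_span hgS)
      rwa [smul_eq_mul] at this
    set P : RepEnt k X := ((1 : k), a, g, wg) with hPdef
    have hcoeff : h.coeff wf = 0 := by
      rw [hh, MonoidAlgebra.coeff_sub, Finsupp.sub_apply, monic_coeff lt hwo (hmonic f hfS) hlf, heq,
        single_mul_coeff, monic_coeff lt hwo (hmonic g hgS) hlg, one_mul, sub_self]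
    have hbound : ∀ u, h.coeff u ≠ 0 → lt u wf := by
      intro u hu
      have hune : u ≠ wf := by rintro rfl; exact hu hcoeff
      have : f.coeff u ≠ 0 ∨ (MonoidAlgebra.single a (1 : k) * g).coeff u ≠ 0 := by
        by_contra hcon
        push_neg at hcon
        apply hu
        rw [hh, MonoidAlgebra.coeff_sub, Finsupp.sub_apply, hcon.1, hcon.2, sub_self]
      rcases this with hcase | hcase
      · exact hlf.2 u hcase hune
      · rcases entPoly_apply_bound lt hwo hleft (p := P) hlg hcase with h' | h'
        · exact absurd (h'.trans heq.symm) hune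
        · have hPl : entLead P = a * wg := rfl
          rw [hPl, ← heq] at h'
          exact h'
    obtain ⟨wh, hlwh⟩ := exists_leadWord lt hwo hh0
    have hwhlt : lt wh wf := hbound wh hlwh.1
    obtain ⟨L, hrep, hsum, _, hbd, _⟩ :=
      decomp lt hwo hleft S hmonic H2 wh h hmem hh0 hlwh
    refine ⟨L.length, fun i => (L.get i).1, fun i => (L.get i).2.1,
      fun i => (L.get i).2.2.1, fun i => (L.get i).2.2.2,
      fun i => (hrep _ (L.get_mem i)).2.1, fun i => (hrep _ (L.get_mem i)).2.2, ?_, ?_⟩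
    · rw [← hsum, repSum_eq_fin]; rfl
    · intro i
      have := hbd _ (L.get_mem i)
      rcases this with h' | h'
      · rw [entLead] at h'
        rw [h']; exact hwhlt
      · rw [entLead] at h'
        exact hwo.trans _ _ _ h' hwhlt

end Main2

section Reduce

variable {k X : Type*} [Field k]
variable (lt : FreeMonoid X → FreeMonoid X → Prop)
  (S : Set (FreeAssocAlg k X))

/-- `u` is irreducible (in `Red(S)`). -/
def Irr (u : FreeMonoid X) : Prop :=
  ∀ (a ws : FreeMonoid X) (s : FreeAssocAlg k X), s ∈ S → LeadWord lt s ws → u ≠ a * ws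

variable (hwo : IsWellOrder (FreeMonoid X) lt)
  (hleft : ∀ u v w : FreeMonoid X, lt u v → lt (w * u) (w * v))
  (hmonic : ∀ s ∈ S, IsMonicPoly lt s)
include hwo hleft hmonic

theorem reduce : ∀ w (f : FreeAssocAlg k X), (∀ u, f.coeff u ≠ 0 → u = w ∨ lt u w) →
    ∃ r : FreeAssocAlg k X,
      (∀ u, r.coeff u ≠ 0 → Irr lt S u) ∧
      f - r ∈ Submodule.span (FreeAssocAlg k X) S ∧
      (∀ u, r.coeff u ≠ 0 → u = w ∨ lt u w) ∧
      (Irr lt S w → r.coeff w = f.coeff w) := by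
  classical
  intro w
  induction w using (hwo.wf).induction with
  | _ w ih =>
  intro f hbd
  by_cases hfw : f.coeff w = 0
  · by_cases hf0 : f = 0
    · exact ⟨0, by simp, by simp [hf0], by simp, by simp [hf0, hfw]⟩
    · obtain ⟨w', hlw'⟩ := exists_leadWord lt hwo hf0
      have hw'w : lt w' w := by
        rcases hbd w' hlw'.1 with rfl | h
        · exact absurd hfw hlw'.1
        · exact h
      obtain ⟨r, hr1, hr2, hr3, _⟩ := ih w' hw'w f (by
        intro u hu
        by_cases hne : u = w'
        · exact Or.inl hne
        · exact Or.inr (hlw'.2 u hu hne))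
      have hrw : r.coeff w = 0 := by
        by_contra hrw
        rcases hr3 w hrw with rfl | h
        · exact hwo.wf.asymmetric _ _ hw'w hw'w
        · exact hwo.wf.asymmetric _ _ h hw'w
      refine ⟨r, hr1, hr2, ?_, fun _ => by rw [hrw, hfw]⟩
      intro u hu
      rcases hr3 u hu with rfl | h
      · exact Or.inr hw'w
      · exact Or.inr (hwo.trans _ _ _ h hw'w)
  · by_cases hirr : Irr lt S w
    · -- leading word irreducible: move it to the output
      set f'' := f - MonoidAlgebra.single w (f.coeff w) with hf''
      have hcoeff : f''.coeff w = 0 := by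
        rw [hf'', MonoidAlgebra.coeff_sub, Finsupp.sub_apply, MonoidAlgebra.single_apply, if_pos rfl, sub_self]
      have hbd'' : ∀ u, f''.coeff u ≠ 0 → lt u w := by
        intro u hu
        have hune : u ≠ w := by rintro rfl; exact hu hcoeff
        have hfu : f.coeff u ≠ 0 := by
          intro h0
          apply hu
          rw [hf'', MonoidAlgebra.coeff_sub, Finsupp.sub_apply, h0, MonoidAlgebra.single_apply,
            if_neg (Ne.symm hune), sub_self]
        rcases hbd u hfu with rfl | h
        · exact absurd rfl hune
        · exact h
      by_cases hf''0 : f'' = 0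
      · refine ⟨MonoidAlgebra.single w (f.coeff w), ?_, ?_, ?_, ?_⟩
        · intro u hu
          have : u = w := by
            by_contra hne
            exact hu (by rw [MonoidAlgebra.single_apply, if_neg (Ne.symm hne)])
          subst this
          exact hirr
        · have : f - MonoidAlgebra.single w (f.coeff w) = 0 := hf''0
          rw [this]
          exact Submodule.zero_mem _
        · intro u hu
          have : u = w := by
            by_contra hne
            exact hu (by rw [MonoidAlgebra.single_apply, if_neg (Ne.symm hne)])
          exact Or.inl this
        · intro _
          rw [MonoidAlgebra.single_apply, if_pos rfl]
      · obtain ⟨w'', hlw''⟩ := exists_leadWord lt hwo hf''0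
        have hw''w : lt w'' w := hbd'' w'' hlw''.1
        obtain ⟨r'', h1, h2, h3, _⟩ := ih w'' hw''w f'' (by
          intro u hu
          by_cases hne : u = w''
          · exact Or.inl hne
          · exact Or.inr (hlw''.2 u hu hne))
        have hr''w : r''.coeff w = 0 := by
          by_contra hrw
          rcases h3 w hrw with rfl | hcon
          · exact hwo.wf.asymmetric _ _ hw''w hw''w
          · exact hwo.wf.asymmetric _ _ hcon hw''w
        refine ⟨MonoidAlgebra.single w (f.coeff w) + r'', ?_, ?_, ?_, ?_⟩
        · intro u hu
          rw [MonoidAlgebra.coeff_add, Finsupp.add_apply] at hu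
          by_cases hne : u = w
          · subst hne; exact hirr
          · have : r''.coeff u ≠ 0 := by
              intro h0
              apply hu
              rw [MonoidAlgebra.single_apply, if_neg (Ne.symm hne), h0, add_zero]
            exact h1 u this
        · have : f - (MonoidAlgebra.single w (f.coeff w) + r'') = f'' - r'' := by
            rw [hf'']; abel
          rw [this]
          exact h2
        · intro u hu
          rw [MonoidAlgebra.coeff_add, Finsupp.add_apply] at hu
          by_cases hne : u = w
          · exact Or.inl hne
          · have : r''.coeff u ≠ 0 := by
              intro h0
              apply hu
              rw [MonoidAlgebra.single_apply, if_neg (Ne.symm hne), h0, add_zero]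
            rcases h3 u this with rfl | h
            · exact Or.inr hw''w
            · exact Or.inr (hwo.trans _ _ _ h hw''w)
        · intro _
          rw [MonoidAlgebra.coeff_add, Finsupp.add_apply, MonoidAlgebra.single_apply, if_pos rfl, hr''w, add_zero]
    · -- leading word reducible: reduce it
      rw [Irr] at hirr
      push_neg at hirr
      obtain ⟨a, ws, s, hsS, hlws, heq⟩ := hirr
      set p0 : RepEnt k X := (f.coeff w, a, s, ws) with hp0
      have hlead0 : entLead p0 = w := heq.symm
      set f' := f - entPoly p0 with hf'
      have hspan0 : entPoly p0 ∈ Submodule.span (FreeAssocAlg k X) S := by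
        have := Submodule.smul_mem (Submodule.span (FreeAssocAlg k X) S)
          (MonoidAlgebra.single a (f.coeff w)) (Submodule.subset_span hsS)
        rwa [smul_eq_mul] at this
      have hcoeff : f'.coeff w = 0 := by
        rw [hf', MonoidAlgebra.coeff_sub, Finsupp.sub_apply]
        have : (entPoly p0).coeff w = f.coeff w := by
          conv_lhs => rw [← hlead0]
          exact entPoly_lead_coeff lt hwo hleft (p := p0) hlws (hmonic s hsS)
        rw [this, sub_self]
      have hbd' : ∀ u, f'.coeff u ≠ 0 → lt u w := by
        intro u hu
        have hune : u ≠ w := by rintro rfl; exact hu hcoeff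
        have : f.coeff u ≠ 0 ∨ (entPoly p0).coeff u ≠ 0 := by
          by_contra hcon
          push_neg at hcon
          exact hu (by rw [hf', MonoidAlgebra.coeff_sub, Finsupp.sub_apply, hcon.1, hcon.2, sub_self])
        rcases this with hcase | hcase
        · rcases hbd u hcase with rfl | h
          · exact absurd rfl hune
          · exact h
        · rcases entPoly_apply_bound lt hwo hleft hlws hcase with h | h
          · rw [hlead0] at h; exact absurd h hune
          · rwa [hlead0] at h
      by_cases hf'0 : f' = 0
      · refine ⟨0, by simp, ?_, by simp, ?_⟩
        · rw [sub_zero]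
          have : f = entPoly p0 := by
            have := sub_eq_zero.1 hf'0
            exact this
          rw [this]
          exact hspan0
        · intro hcon
          exact absurd heq (hcon a ws s hsS hlws)
      · obtain ⟨w', hlw'⟩ := exists_leadWord lt hwo hf'0
        have hw'w : lt w' w := hbd' w' hlw'.1
        obtain ⟨r, h1, h2, h3, _⟩ := ih w' hw'w f' (by
          intro u hu
          by_cases hne : u = w'
          · exact Or.inl hne
          · exact Or.inr (hlw'.2 u hu hne))
        refine ⟨r, h1, ?_, ?_, ?_⟩
        · have : f - r = entPoly p0 + (f' - r) := by rw [hf']; abel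
          rw [this]
          exact Submodule.add_mem _ hspan0 h2
        · intro u hu
          rcases h3 u hu with rfl | h
          · exact Or.inr hw'w
          · exact Or.inr (hwo.trans _ _ _ h hw'w)
        · intro hcon
          exact absurd heq (hcon a ws s hsS hlws)

end Reduce

section Three

variable {k X : Type*} [Field k]
variable (lt : FreeMonoid X → FreeMonoid X → Prop)
  (S : Set (FreeAssocAlg k X))

theorem mk_sum_single (r : FreeAssocAlg k X) :
    Submodule.Quotient.mk (p := Submodule.span (FreeAssocAlg k X) S) r
      = ∑ u ∈ r.coeff.support, (r.coeff u) •
          Submodule.Quotient.mk (p := Submodule.span (FreeAssocAlg k X) S)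
            (MonoidAlgebra.single u (1 : k)) := by
  conv_lhs => rw [← MonoidAlgebra.sum_coeff_single r]
  rw [Finsupp.sum, ← Submodule.mkQ_apply, map_sum]
  apply Finset.sum_congr rfl
  intro u _
  rw [Submodule.mkQ_apply]
  have h1 : MonoidAlgebra.single u (r.coeff u) = (r.coeff u) • MonoidAlgebra.single u (1 : k) := by
    rw [MonoidAlgebra.smul_single, smul_eq_mul, mul_one]
  rw [h1, Submodule.Quotient.mk_smul]

variable (hwo : IsWellOrder (FreeMonoid X) lt)
  (hleft : ∀ u v w : FreeMonoid X, lt u v → lt (w * u) (w * v))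
  (hmonic : ∀ s ∈ S, IsMonicPoly lt s)
include hwo hleft hmonic

theorem span_top :
    Submodule.span k (Set.range
      (fun w : {w : FreeMonoid X //
          ∀ (a ws : FreeMonoid X) (s : FreeAssocAlg k X),
            s ∈ S → LeadWord lt s ws → w ≠ a * ws} =>
        Submodule.Quotient.mk (p := Submodule.span (FreeAssocAlg k X) S)
          (MonoidAlgebra.single (w : FreeMonoid X) (1 : k)))) = ⊤ := by
  rw [eq_top_iff]
  rintro x -
  obtain ⟨f, rfl⟩ := Submodule.Quotient.mk_surjective _ x
  by_cases hf0 : f = 0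
  · rw [hf0]
    exact Submodule.zero_mem _
  · obtain ⟨w, hlw⟩ := exists_leadWord lt hwo hf0
    obtain ⟨r, h1, h2, _, _⟩ := reduce lt S hwo hleft hmonic w f (by
      intro u hu
      by_cases hne : u = w
      · exact Or.inl hne
      · exact Or.inr (hlw.2 u hu hne))
    have hmk : Submodule.Quotient.mk (p := Submodule.span (FreeAssocAlg k X) S) f
        = Submodule.Quotient.mk (p := Submodule.span (FreeAssocAlg k X) S) r :=
      (Submodule.Quotient.eq _).2 h2
    rw [hmk, mk_sum_single S r]
    apply Submodule.sum_mem
    intro u hu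
    apply Submodule.smul_mem
    apply Submodule.subset_span
    exact ⟨⟨u, h1 u (Finsupp.mem_support_iff.1 hu)⟩, rfl⟩

theorem li_of_two (H2 : Cond2 lt S) :
    LinearIndependent k
      (fun w : {w : FreeMonoid X //
          ∀ (a ws : FreeMonoid X) (s : FreeAssocAlg k X),
            s ∈ S → LeadWord lt s ws → w ≠ a * ws} =>
        Submodule.Quotient.mk (p := Submodule.span (FreeAssocAlg k X) S)
          (MonoidAlgebra.single (w : FreeMonoid X) (1 : k))) := by
  classical
  rw [linearIndependent_iff']
  intro t g hsum i hit
  by_contra hgi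
  set f : FreeAssocAlg k X := ∑ w ∈ t, MonoidAlgebra.single (w : FreeMonoid X) (g w) with hfdef
  have hsupp : ∀ u, f.coeff u ≠ 0 → ∃ w ∈ t, u = (w : FreeMonoid X) := by
    intro u hu
    rw [hfdef, MonoidAlgebra.coeff_sum, Finsupp.finset_sum_apply] at hu
    obtain ⟨w, hw, hw'⟩ := Finset.exists_ne_zero_of_sum_ne_zero hu
    refine ⟨w, hw, ?_⟩
    by_contra hne
    exact hw' (by rw [MonoidAlgebra.single_apply, if_neg (fun hh => hne hh.symm)])
  have hcoeffi : f.coeff (i : FreeMonoid X) = g i := by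
    rw [hfdef, MonoidAlgebra.coeff_sum, Finsupp.finset_sum_apply, Finset.sum_eq_single i]
    · rw [MonoidAlgebra.single_apply, if_pos rfl]
    · intro w _ hwi
      rw [MonoidAlgebra.single_apply,
        if_neg (fun hh => hwi (Subtype.coe_injective hh))]
    · intro hcon
      exact absurd hit hcon
  have hfne : f ≠ 0 := by
    intro h0
    apply hgi
    rw [← hcoeffi, h0]
    rfl
  have hmk : Submodule.Quotient.mk (p := Submodule.span (FreeAssocAlg k X) S) f = 0 := by
    rw [hfdef, ← Submodule.mkQ_apply, map_sum, ← hsum]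
    apply Finset.sum_congr rfl
    intro w _
    rw [Submodule.mkQ_apply]
    have h1 : MonoidAlgebra.single (w : FreeMonoid X) (g w)
        = (g w) • MonoidAlgebra.single (w : FreeMonoid X) (1 : k) := by
      rw [MonoidAlgebra.smul_single, smul_eq_mul, mul_one]
    rw [h1, Submodule.Quotient.mk_smul]
  have hfmem : f ∈ Submodule.span (FreeAssocAlg k X) S :=
    (Submodule.Quotient.mk_eq_zero _).1 hmk
  obtain ⟨a, ws, wf, s, hsS, hlws, hlf, heq⟩ := H2 f hfmem hfne
  obtain ⟨w0, _, hw0⟩ := hsupp wf hlf.1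
  exact (w0.2 a ws s hsS hlws) (hw0 ▸ heq)

theorem two_of_li
    (hli : LinearIndependent k
      (fun w : {w : FreeMonoid X //
          ∀ (a ws : FreeMonoid X) (s : FreeAssocAlg k X),
            s ∈ S → LeadWord lt s ws → w ≠ a * ws} =>
        Submodule.Quotient.mk (p := Submodule.span (FreeAssocAlg k X) S)
          (MonoidAlgebra.single (w : FreeMonoid X) (1 : k)))) : Cond2 lt S := by
  classical
  intro f hf hne
  by_contra hcon
  push_neg at hcon
  obtain ⟨w, hlw⟩ := exists_leadWord lt hwo hne
  have hirrw : Irr lt S w := by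
    intro a ws s hsS hlws
    exact hcon a ws w s hsS hlws hlw
  obtain ⟨r, h1, h2, _, h4⟩ := reduce lt S hwo hleft hmonic w f (by
    intro u hu
    by_cases hne' : u = w
    · exact Or.inl hne'
    · exact Or.inr (hlw.2 u hu hne'))
  have hrw : r.coeff w = f.coeff w := h4 hirrw
  have hrwne : r.coeff w ≠ 0 := by rw [hrw]; exact hlw.1
  have hmkr : Submodule.Quotient.mk (p := Submodule.span (FreeAssocAlg k X) S) r = 0 := by
    have hmk : Submodule.Quotient.mk (p := Submodule.span (FreeAssocAlg k X) S) f
        = Submodule.Quotient.mk (p := Submodule.span (FreeAssocAlg k X) S) r :=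
      (Submodule.Quotient.eq _).2 h2
    rw [← hmk]
    exact (Submodule.Quotient.mk_eq_zero _).2 hf
  -- build the finset in the subtype
  set e : {u // u ∈ r.coeff.support} ↪ {w : FreeMonoid X //
      ∀ (a ws : FreeMonoid X) (s : FreeAssocAlg k X),
        s ∈ S → LeadWord lt s ws → w ≠ a * ws} :=
    ⟨fun u => ⟨u.1, h1 u.1 (Finsupp.mem_support_iff.1 u.2)⟩,
      fun x y hxy => Subtype.ext (Subtype.mk_eq_mk.1 hxy)⟩ with hedef
  set t := r.coeff.support.attach.map e with htdef
  have hsum0 : ∑ w' ∈ t, (r.coeff (w' : FreeMonoid X)) •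
      Submodule.Quotient.mk (p := Submodule.span (FreeAssocAlg k X) S)
        (MonoidAlgebra.single (w' : FreeMonoid X) (1 : k)) = 0 := by
    rw [htdef, Finset.sum_map]
    have : ∀ u : {u // u ∈ r.coeff.support},
        (r.coeff ((e u : {w : FreeMonoid X // _}) : FreeMonoid X)) •
          Submodule.Quotient.mk (p := Submodule.span (FreeAssocAlg k X) S)
            (MonoidAlgebra.single ((e u : {w : FreeMonoid X // _}) : FreeMonoid X) (1 : k))
        = (r.coeff u.1) • Submodule.Quotient.mk (p := Submodule.span (FreeAssocAlg k X) S)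
            (MonoidAlgebra.single u.1 (1 : k)) := fun u => rfl
    rw [Finset.sum_congr rfl (fun u _ => this u)]
    rw [Finset.sum_attach r.coeff.support (fun u => (r.coeff u) •
      Submodule.Quotient.mk (p := Submodule.span (FreeAssocAlg k X) S)
        (MonoidAlgebra.single u (1 : k)))]
    rw [← mk_sum_single S r]
    exact hmkr
  have hmem : (⟨w, hirrw⟩ : {w : FreeMonoid X //
      ∀ (a ws : FreeMonoid X) (s : FreeAssocAlg k X),
        s ∈ S → LeadWord lt s ws → w ≠ a * ws}) ∈ t := by
    rw [htdef, Finset.mem_map]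
    exact ⟨⟨w, Finsupp.mem_support_iff.2 hrwne⟩, Finset.mem_attach _ _, rfl⟩
  have := linearIndependent_iff'.1 hli t
    (fun w' => r.coeff (w' : FreeMonoid X)) hsum0 _ hmem
  exact hrwne this

end Three

theorem composition_diamond_left_ideals
    (lt : FreeMonoid X → FreeMonoid X → Prop)
    (hwo : IsWellOrder (FreeMonoid X) lt)
    (hleft : ∀ u v w : FreeMonoid X, lt u v → lt (w * u) (w * v))
    (S : Set (FreeAssocAlg k X)) (hne : S.Nonempty)
    (hmonic : ∀ s ∈ S, IsMonicPoly lt s) :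
    -- (1) ↔ (2)
    ((IsGSBasisLeftIdeal lt S ↔
      ∀ f ∈ Submodule.span (FreeAssocAlg k X) S, f ≠ 0 →
        ∃ (a ws wf : FreeMonoid X) (s : FreeAssocAlg k X),
          s ∈ S ∧ LeadWord lt s ws ∧ LeadWord lt f wf ∧ wf = a * ws)
    -- (2) ↔ (2')
    ∧ ((∀ f ∈ Submodule.span (FreeAssocAlg k X) S, f ≠ 0 →
        ∃ (a ws wf : FreeMonoid X) (s : FreeAssocAlg k X),
          s ∈ S ∧ LeadWord lt s ws ∧ LeadWord lt f wf ∧ wf = a * ws) ↔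
       (∀ f ∈ Submodule.span (FreeAssocAlg k X) S, f ≠ 0 →
        ∃ (n : ℕ) (α : Fin n → k) (a : Fin n → FreeMonoid X)
          (s : Fin n → FreeAssocAlg k X) (ws : Fin n → FreeMonoid X),
            (∀ i, α i ≠ 0) ∧ (∀ i, s i ∈ S) ∧ (∀ i, LeadWord lt (s i) (ws i)) ∧
            f = ∑ i, MonoidAlgebra.single (a i) (α i) * s i ∧
            ∀ i j : Fin n, i < j → lt (a j * ws j) (a i * ws i)))
    -- (2) ↔ (3)
    ∧ ((∀ f ∈ Submodule.span (FreeAssocAlg k X) S, f ≠ 0 →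
        ∃ (a ws wf : FreeMonoid X) (s : FreeAssocAlg k X),
          s ∈ S ∧ LeadWord lt s ws ∧ LeadWord lt f wf ∧ wf = a * ws) ↔
       (LinearIndependent k
          (fun w : {w : FreeMonoid X //
              ∀ (a ws : FreeMonoid X) (s : FreeAssocAlg k X),
                s ∈ S → LeadWord lt s ws → w ≠ a * ws} =>
            Submodule.Quotient.mk (p := Submodule.span (FreeAssocAlg k X) S)
              (MonoidAlgebra.single (w : FreeMonoid X) (1 : k))) ∧
        Submodule.span k (Set.range
          (fun w : {w : FreeMonoid X //
              ∀ (a ws : FreeMonoid X) (s : FreeAssocAlg k X),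
                s ∈ S → LeadWord lt s ws → w ≠ a * ws} =>
            Submodule.Quotient.mk (p := Submodule.span (FreeAssocAlg k X) S)
              (MonoidAlgebra.single (w : FreeMonoid X) (1 : k)))) = ⊤))) := by
  refine ⟨?_, ?_, ?_⟩
  · exact ⟨fun h => one_implies_two lt hwo hleft S hmonic h,
      fun h => two_implies_one lt hwo hleft S hmonic h⟩
  · exact ⟨fun h => two_implies_two' lt hwo hleft S hmonic h,
      fun h => two'_implies_two lt hwo hleft S hmonic h⟩
  · exact ⟨fun h => ⟨li_of_two lt S hwo hleft hmonic h,
        span_top lt S hwo hleft hmonic⟩,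
      fun h => two_of_li lt S hwo hleft hmonic h.1⟩
end

section
/- Let S ⊆ k⟨X⟩ be a nonempty set of monic polynomials and < a left compatible well order on X*. Suppose S is a minimal Gröbner–Shirshov basis of the left ideal k⟨X⟩S, i.e., there are no compositions between elements of S at all: f̄ ≠ a·ḡ for all f, g ∈ S with f ≠ g and all a ∈ X*. Then k⟨X⟩S is a free left k⟨X⟩-module with basis S. -/
/-! A minimal Gröbner–Shirshov basis of a left ideal of the free algebra is a
free-module basis of that left ideal. -/

open MonoidAlgebra

variable {k X : Type*} [Field k]

/-- Auxiliary: the leading word of `c * f` is `u * wf` for some `u` in the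
support of `c`, where `wf` is the leading word of `f`. -/
lemma lead_mul_aux (lt : FreeMonoid X → FreeMonoid X → Prop)
    (hwo : IsWellOrder (FreeMonoid X) lt)
    (hleft : ∀ u v w : FreeMonoid X, lt u v → lt (w * u) (w * v))
    (c f : FreeAssocAlg k X) (hc : c ≠ 0) (wf : FreeMonoid X)
    (hf : LeadWord lt f wf) :
    ∃ u : FreeMonoid X, c.coeff u ≠ 0 ∧ LeadWord lt (c * f) (u * wf) := by
  classical
  haveI := hwo
  letI : LinearOrder (FreeMonoid X) := IsWellOrder.linearOrder lt
  have hcs : c.coeff.support.Nonempty := Finsupp.support_nonempty_iff.mpr (by simpa using hc)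
  have hTne : (c.coeff.support.image (· * wf)).Nonempty := hcs.image (· * wf)
  obtain ⟨u0, hu0, hm⟩ := Finset.mem_image.mp ((c.coeff.support.image (· * wf)).max'_mem hTne)
  have hmax : ∀ u ∈ c.coeff.support, u * wf ≤ u0 * wf := by
    intro u hu
    have h := Finset.le_max' (c.coeff.support.image (· * wf)) (u * wf)
      (Finset.mem_image_of_mem _ hu)
    rwa [← hm] at h
  -- uniqueness of decomposition at the top word
  have huniq : ∀ u v : FreeMonoid X, c.coeff u ≠ 0 → f.coeff v ≠ 0 → u * v = u0 * wf →
      u = u0 ∧ v = wf := by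
    intro u v hu hv huv
    rcases eq_or_ne v wf with rfl | hne
    · exact ⟨mul_right_cancel huv, rfl⟩
    · exfalso
      have h1 : lt (u * v) (u * wf) := hleft _ _ _ (hf.2 v hv hne)
      have h2 : u0 * wf < u * wf := huv ▸ h1
      exact absurd (lt_of_lt_of_le h2 (hmax u (Finsupp.mem_support_iff.mpr hu)))
        (lt_irrefl _)
  have hval : (c * f).coeff (u0 * wf) = c.coeff u0 * f.coeff wf := by
    rw [MonoidAlgebra.coeff_mul]
    rw [Finsupp.sum]
    rw [Finset.sum_eq_single u0]
    · rw [Finsupp.sum, Finset.sum_eq_single wf]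
      · simp
      · intro v hv hvne
        rw [if_neg]
        intro h
        exact hvne (huniq u0 v (Finsupp.mem_support_iff.mp hu0)
          (Finsupp.mem_support_iff.mp hv) h).2
      · intro h
        simp [Finsupp.notMem_support_iff.mp h]
    · intro u hu hune
      rw [Finsupp.sum]
      refine Finset.sum_eq_zero fun v hv => ?_
      rw [if_neg]
      intro h
      exact hune (huniq u v (Finsupp.mem_support_iff.mp hu)
        (Finsupp.mem_support_iff.mp hv) h).1
    · intro h; exact absurd hu0 h
  have hne0 : (c * f).coeff (u0 * wf) ≠ 0 := by
    rw [hval]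
    exact mul_ne_zero (Finsupp.mem_support_iff.mp hu0) hf.1
  refine ⟨u0, Finsupp.mem_support_iff.mp hu0, hne0, ?_⟩
  intro w hw hwne
  have hwmem : w ∈ (c * f).coeff.support := Finsupp.mem_support_iff.mpr hw
  obtain ⟨u, hu, v, hv, huv⟩ := Finset.mem_mul.mp (MonoidAlgebra.support_coeff_mul_subset c f hwmem)
  subst huv
  rcases eq_or_ne v wf with rfl | hne
  · exact lt_of_le_of_ne (hmax u hu) hwne
  · exact lt_of_lt_of_le (hleft _ _ _ (hf.2 v (Finsupp.mem_support_iff.mp hv) hne))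
      (hmax u hu)

/-- Auxiliary: in a free monoid, if `a * b = c * d` then `b` and `d` are
comparable as suffixes. -/
lemma freeMonoid_mul_eq (a b c d : FreeMonoid X) (h : a * b = c * d) :
    (∃ e, b = e * d) ∨ (∃ e, d = e * b) := by
  have h' : a.toList ++ b.toList = c.toList ++ d.toList := congrArg FreeMonoid.toList h
  rcases List.append_eq_append_iff.mp h' with ⟨a', _, hb⟩ | ⟨c', _, hd⟩
  · exact Or.inl ⟨FreeMonoid.ofList a', FreeMonoid.toList.injective (by simpa using hb)⟩
  · exact Or.inr ⟨FreeMonoid.ofList c', FreeMonoid.toList.injective (by simpa using hd)⟩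

/-- If `S` is a minimal Gröbner–Shirshov basis of the left ideal `k⟨X⟩S`,
i.e. there are no compositions between elements of `S` at all
(`f̄ ≠ a·ḡ` for all `f ≠ g` in `S` and all `a ∈ X*`), then `k⟨X⟩S` is a free
left `k⟨X⟩`-module with basis `S`. -/
theorem minimal_GSB_left_ideal_free
    (lt : FreeMonoid X → FreeMonoid X → Prop)
    (hwo : IsWellOrder (FreeMonoid X) lt)
    (hleft : ∀ u v w : FreeMonoid X, lt u v → lt (w * u) (w * v))
    (S : Set (FreeAssocAlg k X)) (hne : S.Nonempty)
    (hmonic : ∀ s ∈ S, IsMonicPoly lt s)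
    (hmin : ∀ f ∈ S, ∀ g ∈ S, f ≠ g → ∀ wf wg : FreeMonoid X,
      LeadWord lt f wf → LeadWord lt g wg → ∀ a : FreeMonoid X, wf ≠ a * wg) :
    LinearIndependent (FreeAssocAlg k X) (fun s : S => (s : FreeAssocAlg k X)) ∧
    Submodule.span (FreeAssocAlg k X) (Set.range (fun s : S => (s : FreeAssocAlg k X)))
      = Submodule.span (FreeAssocAlg k X) S := by
  classical
  haveI := hwo
  letI : LinearOrder (FreeMonoid X) := IsWellOrder.linearOrder lt
  constructor
  · rw [linearIndependent_iff]
    intro l hl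
    by_contra hl0
    have hsupp : l.support.Nonempty := Finsupp.support_nonempty_iff.mpr hl0
    have hmonic' : ∀ s : S, IsMonicPoly lt (s : FreeAssocAlg k X) :=
      fun s => hmonic s s.2
    choose W hW hW1 using hmonic'
    have hlead : ∀ s : S, l s ≠ 0 →
        ∃ u, (l s).coeff u ≠ 0 ∧ LeadWord lt (l s * (s : FreeAssocAlg k X)) (u * W s) :=
      fun s hs => lead_mul_aux lt hwo hleft (l s) s hs (W s) (hW s)
    choose U hU1 hU2 using hlead
    -- the lead words of the summands
    set g : S → FreeMonoid X := fun s =>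
      if h : l s ≠ 0 then U s h * W s else 1 with hg
    -- g is injective on the support
    have hginj : ∀ s ∈ l.support, ∀ s' ∈ l.support, g s = g s' → s = s' := by
      intro s hs s' hs' hgss
      by_contra hne'
      have hs0 : l s ≠ 0 := Finsupp.mem_support_iff.mp hs
      have hs0' : l s' ≠ 0 := Finsupp.mem_support_iff.mp hs'
      rw [hg] at hgss
      simp only [dif_pos hs0, dif_pos hs0'] at hgss
      have hcne : (s : FreeAssocAlg k X) ≠ (s' : FreeAssocAlg k X) :=
        fun h => hne' (Subtype.coe_injective h)
      rcases freeMonoid_mul_eq _ _ _ _ hgss with ⟨e, he⟩ | ⟨e, he⟩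
      · exact hmin s s.2 s' s'.2 hcne (W s) (W s') (hW s) (hW s') e he
      · exact hmin s' s'.2 s s.2 hcne.symm (W s') (W s) (hW s') (hW s) e he
    -- the maximal lead word
    have hTne : (l.support.image g).Nonempty := hsupp.image g
    obtain ⟨s0, hs0mem, hs0⟩ := Finset.mem_image.mp ((l.support.image g).max'_mem hTne)
    set m := (l.support.image g).max' hTne with hmdef
    have hs00 : l s0 ≠ 0 := Finsupp.mem_support_iff.mp hs0mem
    -- evaluate the relation at m
    rw [Finsupp.linearCombination_apply] at hl
    have hm0 : (l.sum fun s c => c * (s : FreeAssocAlg k X)).coeff m = 0 := by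
      simp only [smul_eq_mul] at hl; rw [hl]; rfl
    rw [MonoidAlgebra.coeff_finsuppSum, Finsupp.sum_apply, Finsupp.sum, Finset.sum_eq_single s0] at hm0
    · have hs0' : U s0 hs00 * W s0 = m := by
        rw [hg] at hs0; simpa [dif_pos hs00] using hs0
      apply (hU2 s0 hs00).1
      rw [hs0']
      exact hm0
    · intro s hs hne'
      by_contra h0
      have hsn : l s ≠ 0 := Finsupp.mem_support_iff.mp hs
      have hmlead : lt m (U s hsn * W s) := by
        refine (hU2 s hsn).2 m h0 ?_
        intro heq
        apply hne'
        apply hginj s hs s0 hs0mem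
        have hs0' : U s0 hs00 * W s0 = m := by
          rw [hg] at hs0; simpa [dif_pos hs00] using hs0
        rw [hg]; simp only [dif_pos hsn, dif_pos hs00]
        rw [← heq]
        exact hs0'.symm
      have hle : U s hsn * W s ≤ m := by
        apply Finset.le_max'
        apply Finset.mem_image.mpr
        exact ⟨s, hs, by rw [hg]; simp [dif_pos hsn]⟩
      exact absurd (lt_of_lt_of_le hmlead hle) (lt_irrefl m)
    · intro h; exact absurd hs0mem h
  · congr 1
    exact Subtype.range_coe
end
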